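/- arXiv:0906.1364 — 4 statements merged into one kernel-verified Lean document; each statement's English description precedes it below -/
import Mathlib

section
/- Let v be the Coxeter element of the symmetric group S_n given by v = s_{[i_{k-1},i_k]} ··· s_{[i_1,i_2]} s_{[1,i_1]}, where s_{[p,q]} = s_p s_{p+1} ··· s_{q-1} and 1 = i_0 < i_1 < ... < i_k = n. Let L = {1 = l_0 < l_1 < ... < l_{n-k} = n} be determined by {l_1 < ... < l_{n-k-1}} = [1,n] \ I, where I = {i_0,...,i_k}. Then v^{-1} = s_{[l_{n-k-1},l_{n-k}]} ··· s_{[l_1,l_2]} s_{[1,l_1]}. -/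
/-- `s_{[p,q]} = s_p s_{p+1} ⋯ s_{q-1}`, where `s_i` is the transposition `(i, i+1)`. -/
def sInt (p q : ℕ) : Equiv.Perm ℕ :=
  ((List.range' p (q - p)).map (fun j => Equiv.swap j (j + 1))).prod

/-- Given endpoints `f 0 < f 1 < ⋯ < f m`, the Coxeter element
`s_{[f (m-1), f m]} ⋯ s_{[f 1, f 2]} s_{[f 0, f 1]}`. -/
def coxProd (f : ℕ → ℕ) (m : ℕ) : Equiv.Perm ℕ :=
  (((List.range m).reverse).map (fun j => sInt (f j) (f (j + 1)))).prod

lemma sInt_eq_one (p q : ℕ) (h : q ≤ p) : sInt p q = 1 := by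
  simp [sInt, Nat.sub_eq_zero_of_le h]

lemma sInt_succ (p q : ℕ) (h : p < q) :
    sInt p q = Equiv.swap p (p + 1) * sInt (p + 1) q := by
  obtain ⟨d, hd⟩ : ∃ d, q - p = d + 1 := ⟨q - p - 1, by omega⟩
  have hd' : q - (p + 1) = d := by omega
  unfold sInt
  rw [hd, hd', List.range'_succ, List.map_cons, List.prod_cons]

lemma sInt_apply_of_lt (p q x : ℕ) (h : x < p) : sInt p q x = x := by
  rcases le_or_gt q p with hq | hq
  · rw [sInt_eq_one p q hq]; rfl
  · rw [sInt_succ p q hq, Equiv.Perm.mul_apply,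
      sInt_apply_of_lt (p + 1) q x (by omega),
      Equiv.swap_apply_of_ne_of_ne (by omega) (by omega)]
termination_by q - p

lemma sInt_apply_of_gt (p q x : ℕ) (h : q < x) : sInt p q x = x := by
  rcases le_or_gt q p with hq | hq
  · rw [sInt_eq_one p q hq]; rfl
  · rw [sInt_succ p q hq, Equiv.Perm.mul_apply,
      sInt_apply_of_gt (p + 1) q x h,
      Equiv.swap_apply_of_ne_of_ne (by omega) (by omega)]
termination_by q - p

lemma sInt_apply_of_mem (p q x : ℕ) (h1 : p ≤ x) (h2 : x < q) :
    sInt p q x = x + 1 := by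
  rcases eq_or_lt_of_le h1 with rfl | hlt
  · rw [sInt_succ p q h2, Equiv.Perm.mul_apply,
      sInt_apply_of_lt (p + 1) q p (by omega), Equiv.swap_apply_left]
  · rw [sInt_succ p q (lt_trans hlt h2), Equiv.Perm.mul_apply,
      sInt_apply_of_mem (p + 1) q x (by omega) h2,
      Equiv.swap_apply_of_ne_of_ne (by omega) (by omega)]
termination_by q - p

lemma sInt_apply_top (p q : ℕ) (h : p ≤ q) : sInt p q q = p := by
  rcases eq_or_lt_of_le h with rfl | hlt
  · rw [sInt_eq_one p p le_rfl]; rfl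
  · rw [sInt_succ p q hlt, Equiv.Perm.mul_apply,
      sInt_apply_top (p + 1) q (by omega), Equiv.swap_apply_right]
termination_by q - p

lemma coxProd_zero (f : ℕ → ℕ) : coxProd f 0 = 1 := by
  simp [coxProd]

lemma coxProd_succ (f : ℕ → ℕ) (m : ℕ) :
    coxProd f (m + 1) = sInt (f m) (f (m + 1)) * coxProd f m := by
  unfold coxProd
  rw [List.range_succ, List.reverse_append]
  simp

section
variable (f : ℕ → ℕ) (m : ℕ)

lemma strictMonoOn_restrict (hf : StrictMonoOn f (Set.Icc 0 (m + 1))) :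
    StrictMonoOn f (Set.Icc 0 m) :=
  hf.mono (Set.Icc_subset_Icc_right (by omega))

lemma mono_lt (hf : StrictMonoOn f (Set.Icc 0 m)) {a b : ℕ} (h : a < b) (hb : b ≤ m) :
    f a < f b :=
  hf ⟨Nat.zero_le _, by omega⟩ ⟨Nat.zero_le _, hb⟩ h

lemma mono_le (hf : StrictMonoOn f (Set.Icc 0 m)) {a b : ℕ} (h : a ≤ b) (hb : b ≤ m) :
    f a ≤ f b := by
  rcases eq_or_lt_of_le h with rfl | hlt
  · exact le_rfl
  · exact (mono_lt f m hf hlt hb).le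

lemma coxProd_fix_top (x : ℕ) (hf : StrictMonoOn f (Set.Icc 0 m)) (hx : f m < x) :
    coxProd f m x = x := by
  induction m with
  | zero => rw [coxProd_zero]; rfl
  | succ m ih =>
    rw [coxProd_succ, Equiv.Perm.mul_apply,
      ih (strictMonoOn_restrict f m hf)
        (lt_trans (mono_lt f (m + 1) hf (Nat.lt_succ_self m) le_rfl) hx),
      sInt_apply_of_gt _ _ _ hx]

lemma coxProd_fix_bot (x : ℕ) (hf : StrictMonoOn f (Set.Icc 0 m)) (hx : x < f 0) :
    coxProd f m x = x := by
  induction m with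
  | zero => rw [coxProd_zero]; rfl
  | succ m ih =>
    rw [coxProd_succ, Equiv.Perm.mul_apply, ih (strictMonoOn_restrict f m hf),
      sInt_apply_of_lt _ _ _ (lt_of_lt_of_le hx (mono_le f (m + 1) hf (Nat.zero_le m) (by omega)))]

lemma coxProd_apply_f (j : ℕ) (hf : StrictMonoOn f (Set.Icc 0 m)) (hj : 1 ≤ j)
    (hjm : j ≤ m) : coxProd f m (f j) = f (j - 1) := by
  induction m with
  | zero => omega
  | succ m ih =>
    rw [coxProd_succ, Equiv.Perm.mul_apply]
    rcases Nat.lt_or_ge j (m + 1) with h | h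
    · rw [ih (strictMonoOn_restrict f m hf) (by omega)]
      exact sInt_apply_of_lt _ _ _ (mono_lt f (m + 1) hf (by omega) (by omega))
    · have hj' : j = m + 1 := by omega
      subst hj'
      rw [coxProd_fix_top f m _ (strictMonoOn_restrict f m hf)
        (mono_lt f (m + 1) hf (Nat.lt_succ_self m) le_rfl)]
      rw [Nat.add_sub_cancel]
      exact sInt_apply_top (f m) (f (m + 1))
        (mono_lt f (m + 1) hf (Nat.lt_succ_self m) le_rfl).le

end

lemma coxProd_apply_gap (f : ℕ → ℕ) (m : ℕ) : ∀ x y : ℕ,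
    StrictMonoOn f (Set.Icc 0 m) → f 0 ≤ x → y ≤ f m → x < y →
    (x = f 0 ∨ ∀ t ≤ m, f t ≠ x) →
    (y = f m ∨ ∀ t ≤ m, f t ≠ y) →
    (∀ z, x < z → z < y → ∃ t, t ≤ m ∧ f t = z) →
    coxProd f m x = y := by
  induction m with
  | zero => intro x y _ hx0 hym hxy _ _ _; omega
  | succ m ih =>
    intro x y hf hx0 hym hxy hx hy hgap
    have hf' : StrictMonoOn f (Set.Icc 0 m) := strictMonoOn_restrict f m hf
    have hmm : f m < f (m + 1) := mono_lt f (m + 1) hf (Nat.lt_succ_self m) le_rfl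
    rw [coxProd_succ, Equiv.Perm.mul_apply]
    rcases le_or_gt y (f m) with hy1 | hy1
    · have hyne : y ≠ f m := by
        rcases hy with h | h
        · omega
        · exact fun he => h m (by omega) he.symm
      have hstep : coxProd f m x = y := by
        apply ih x y hf' hx0 hy1 hxy
        · exact hx.imp id fun h t ht => h t (by omega)
        · refine Or.inr fun t ht he => ?_
          rcases hy with h | h
          · have : f t ≤ f m := mono_le f (m + 1) hf (by omega) (by omega)
            omega
          · exact h t (by omega) he
        · intro z h1 h2
          obtain ⟨t, ht, he⟩ := hgap z h1 h2
          refine ⟨t, ?_, he⟩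
          by_contra hc
          have : t = m + 1 := by omega
          subst this
          omega
      rw [hstep, sInt_apply_of_lt _ _ _ (lt_of_le_of_ne hy1 hyne)]
    · have hyfm1 : y ≤ f (m + 1) := hym
      rcases lt_trichotomy x (f m) with hx1 | hx1 | hx1
      · have hstep : coxProd f m x = f m := by
          apply ih x (f m) hf' hx0 le_rfl hx1
          · exact hx.imp id fun h t ht => h t (by omega)
          · exact Or.inl rfl
          · intro z h1 h2
            obtain ⟨t, ht, he⟩ := hgap z h1 (lt_trans h2 hy1)
            refine ⟨t, ?_, he⟩
            by_contra hc
            have : t = m + 1 := by omega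
            subst this
            omega
        rw [hstep, sInt_apply_of_mem _ _ _ le_rfl hmm]
        by_contra hne
        have hlt : f m + 1 < y := by omega
        obtain ⟨t, ht, he⟩ := hgap (f m + 1) (by omega) hlt
        rcases Nat.lt_or_ge t (m + 1) with h | h
        · have : f t ≤ f m := mono_le f (m + 1) hf (by omega) (by omega)
          omega
        · have : t = m + 1 := by omega
          subst this
          omega
      · have hm0 : m = 0 := by
          rcases hx with h | h
          · by_contra hm
            have := mono_lt f (m + 1) hf (show 0 < m by omega) (by omega)
            omega
          · exact absurd hx1.symm (h m (by omega))
        subst hm0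
        have hym' : y ≤ f 1 := hym
        rw [coxProd_zero]
        have hy2 : y = x + 1 := by
          by_contra hne
          have hlt : x + 1 < y := by omega
          obtain ⟨t, ht, he⟩ := hgap (x + 1) (by omega) hlt
          have h1 : f 1 = f (0 + 1) := rfl
          interval_cases t <;> omega
        simp only [Equiv.Perm.one_apply]
        rw [sInt_apply_of_mem _ _ _ (le_of_eq hx1.symm) (by omega)]
        omega
      · rw [coxProd_fix_top f m x hf' hx1,
          sInt_apply_of_mem _ _ _ hx1.le (lt_of_lt_of_le hxy hyfm1)]
        by_contra hne
        have hlt : x + 1 < y := by omega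
        obtain ⟨t, ht, he⟩ := hgap (x + 1) (by omega) hlt
        rcases Nat.lt_or_ge t (m + 1) with h | h
        · have : f t ≤ f m := mono_le f (m + 1) hf (by omega) (by omega)
          omega
        · have : t = m + 1 := by omega
          subst this
          omega

theorem coxeter_inverse (n k : ℕ) (hn : 2 ≤ n) (hk : 1 ≤ k) (hkn : k ≤ n - 1)
    (i l : ℕ → ℕ)
    (hi0 : i 0 = 1) (hik : i k = n)
    (himono : StrictMonoOn i (Set.Icc 0 k))
    (hl0 : l 0 = 1) (hlnk : l (n - k) = n)
    (hlmono : StrictMonoOn l (Set.Icc 0 (n - k)))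
    (hcompl : Finset.image l (Finset.Icc 1 (n - k - 1)) =
      Finset.Icc 1 n \ Finset.image i (Finset.Icc 0 k)) :
    (coxProd i k)⁻¹ = coxProd l (n - k) := by
  have hnk : 1 ≤ n - k := by omega
  have hkey : ∀ z, (∃ t, 1 ≤ t ∧ t ≤ n - k - 1 ∧ l t = z) ↔
      (1 ≤ z ∧ z ≤ n ∧ ∀ t ≤ k, i t ≠ z) := by
    intro z
    have := Finset.ext_iff.mp hcompl z
    simp only [Finset.mem_image, Finset.mem_Icc, Finset.mem_sdiff] at this
    constructor
    · intro ⟨t, h1, h2, h3⟩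
      obtain ⟨⟨hz1, hz2⟩, hni⟩ := this.mp ⟨t, ⟨h1, h2⟩, h3⟩
      exact ⟨hz1, hz2, fun t ht he => hni ⟨t, ⟨Nat.zero_le _, ht⟩, he⟩⟩
    · intro ⟨hz1, hz2, h⟩
      obtain ⟨t, ⟨h1, h2⟩, h3⟩ := this.mpr ⟨⟨hz1, hz2⟩, fun ⟨t, ⟨_, ht⟩, he⟩ => h t ht he⟩
      exact ⟨t, h1, h2, h3⟩
  rw [inv_eq_iff_mul_eq_one]
  ext x
  simp only [Equiv.Perm.mul_apply, Equiv.Perm.one_apply]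
  rcases Nat.lt_or_ge x 1 with hx1 | hx1
  · rw [coxProd_fix_bot l (n - k) x hlmono (by omega),
      coxProd_fix_bot i k x himono (by omega)]
  rcases Nat.lt_or_ge n x with hx2 | hx2
  · rw [coxProd_fix_top l (n - k) x hlmono (by omega),
      coxProd_fix_top i k x himono (by omega)]
  by_cases hxl : ∃ j, 1 ≤ j ∧ j ≤ n - k ∧ l j = x
  · obtain ⟨j, hj1, hj2, rfl⟩ := hxl
    rw [coxProd_apply_f l (n - k) j hlmono hj1 hj2]
    apply coxProd_apply_gap i k (l (j - 1)) (l j) himono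
    · rw [hi0]
      have := mono_le l (n - k) hlmono (Nat.zero_le (j - 1)) (by omega)
      omega
    · rw [hik]
      exact hx2
    · exact mono_lt l (n - k) hlmono (by omega) hj2
    · rcases Nat.eq_or_lt_of_le hj1 with h | h
      · left; rw [← h, hi0]; exact hl0
      · right
        have hmem : ∃ t, 1 ≤ t ∧ t ≤ n - k - 1 ∧ l t = l (j - 1) :=
          ⟨j - 1, by omega, by omega, rfl⟩
        intro t ht he
        exact ((hkey (l (j - 1))).mp hmem).2.2 t ht he
    · rcases Nat.eq_or_lt_of_le hj2 with h | h
      · left; rw [h, hlnk, hik]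
      · right
        have hmem : ∃ t, 1 ≤ t ∧ t ≤ n - k - 1 ∧ l t = l j :=
          ⟨j, by omega, by omega, rfl⟩
        intro t ht he
        exact ((hkey (l j)).mp hmem).2.2 t ht he
    · intro z h1 h2
      have hz1 : 1 ≤ z := by
        have : 1 ≤ l (j - 1) := by
          have := mono_le l (n - k) hlmono (Nat.zero_le (j - 1)) (by omega)
          omega
        omega
      have hz2 : z ≤ n := by
        have : l j ≤ n := by
          have := mono_le l (n - k) hlmono hj2 le_rfl
          omega
        omega
      by_contra hc
      push_neg at hc
      have : ∃ t, 1 ≤ t ∧ t ≤ n - k - 1 ∧ l t = z :=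
        (hkey z).mpr ⟨hz1, hz2, fun t ht he => hc t ht he⟩
      obtain ⟨t, ht1, ht2, ht3⟩ := this
      rcases Nat.lt_or_ge t j with h | h
      · have : l t ≤ l (j - 1) := mono_le l (n - k) hlmono (by omega) (by omega)
        omega
      · have : l j ≤ l t := mono_le l (n - k) hlmono h (by omega)
        omega
  · -- x is some i j with j < k
    have hxn : x ≠ n := fun he => hxl ⟨n - k, hnk, le_rfl, by rw [hlnk, he]⟩
    have hxi : ∃ j, j < k ∧ i j = x := by
      rcases Nat.eq_or_lt_of_le hx1 with h | h
      · exact ⟨0, by omega, by omega⟩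
      · have hnl : ¬ ∃ t, 1 ≤ t ∧ t ≤ n - k - 1 ∧ l t = x :=
          fun ⟨t, h1, h2, h3⟩ => hxl ⟨t, h1, by omega, h3⟩
        rw [hkey x] at hnl
        push_neg at hnl
        obtain ⟨t, ht, he⟩ := hnl hx1 hx2
        refine ⟨t, ?_, he⟩
        rcases Nat.eq_or_lt_of_le ht with h' | h'
        · exfalso; rw [h', hik] at he; exact hxn he.symm
        · exact h'
    obtain ⟨j, hjk, rfl⟩ := hxi
    have hstep : coxProd l (n - k) (i j) = i (j + 1) := by
      apply coxProd_apply_gap l (n - k) (i j) (i (j + 1)) hlmono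
      · rw [hl0]
        have := mono_le i k himono (Nat.zero_le j) (by omega)
        omega
      · rw [hlnk]
        have := mono_le i k himono (show j + 1 ≤ k from hjk) le_rfl
        omega
      · exact mono_lt i k himono (Nat.lt_succ_self j) hjk
      · rcases Nat.eq_zero_or_pos j with h | h
        · left; rw [h, hi0, hl0]
        · right
          have hij1 : 1 < i j := by
            have := mono_lt i k himono h (by omega)
            omega
          have hijn : i j < n := by
            have := mono_lt i k himono (show j < k from hjk) le_rfl
            omega
          have hnotl : ¬ ∃ t, 1 ≤ t ∧ t ≤ n - k - 1 ∧ l t = i j := by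
            rw [hkey (i j)]
            push_neg
            intro _ _
            exact ⟨j, by omega, rfl⟩
          intro t ht he
          rcases Nat.eq_zero_or_pos t with h' | h'
          · rw [h', hl0] at he; omega
          · rcases Nat.eq_or_lt_of_le ht with h'' | h''
            · rw [h'', hlnk] at he; omega
            · exact hnotl ⟨t, h', by omega, he⟩
      · rcases Nat.eq_or_lt_of_le (show j + 1 ≤ k from hjk) with h | h
        · left; rw [h, hik, hlnk]
        · right
          have hij1 : 1 < i (j + 1) := by
            have := mono_lt i k himono (show 0 < j + 1 by omega) (by omega)
            omega
          have hijn : i (j + 1) < n := by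
            have := mono_lt i k himono h le_rfl
            omega
          have hnotl : ¬ ∃ t, 1 ≤ t ∧ t ≤ n - k - 1 ∧ l t = i (j + 1) := by
            rw [hkey (i (j + 1))]
            push_neg
            intro _ _
            exact ⟨j + 1, by omega, rfl⟩
          intro t ht he
          rcases Nat.eq_zero_or_pos t with h' | h'
          · rw [h', hl0] at he; omega
          · rcases Nat.eq_or_lt_of_le ht with h'' | h''
            · rw [h'', hlnk] at he; omega
            · exact hnotl ⟨t, h', by omega, he⟩
      · intro z h1 h2
        have hz1 : 1 ≤ z := by
          have : 1 ≤ i j := by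
            have := mono_le i k himono (Nat.zero_le j) (by omega)
            omega
          omega
        have hz2 : z ≤ n := by
          have : i (j + 1) ≤ n := by
            have := mono_le i k himono (show j + 1 ≤ k from hjk) le_rfl
            omega
          omega
        have hzni : ∀ t ≤ k, i t ≠ z := by
          intro t ht he
          rcases Nat.lt_or_ge t (j + 1) with h | h
          · have : i t ≤ i j := mono_le i k himono (by omega) (by omega)
            omega
          · have : i (j + 1) ≤ i t := mono_le i k himono h ht
            omega
        obtain ⟨t, ht1, ht2, ht3⟩ := (hkey z).mpr ⟨hz1, hz2, hzni⟩
        exact ⟨t, by omega, ht3⟩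
    rw [hstep, coxProd_apply_f i k (j + 1) himono (by omega) hjk, Nat.add_sub_cancel]
end

section
/- For t ∈ ℂ and i ∈ [1, n-1], let E_i^-(t) = 1 + t·e_{i+1,i}. Given 1 = i_0 < i_1 < ... < i_k = n and complex parameters c_1^-, ..., c_{n-1}^-, define C_j^- = Σ_{α=i_{j-1}}^{i_j - 1} c_α^- e_{α+1,α} for j ∈ [1,k]. Then (1 - C_j^-)^{-1} = E^-_{i_j - 1}(c^-_{i_j - 1}) ··· E^-_{i_{j-1}}(c^-_{i_{j-1}}) (product of elementary lower bidiagonal matrices taken with decreasing indices). -/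
/-- The elementary matrix `e_{a b}` (with rows and columns indexed `1, …, n`):
entry `1` in (1-based) position `(a, b)` and `0` elsewhere. -/
def stdE (n a b : ℕ) : Matrix (Fin n) (Fin n) ℂ :=
  Matrix.of fun r c => if (r : ℕ) + 1 = a ∧ (c : ℕ) + 1 = b then (1 : ℂ) else 0

/-- The elementary lower bidiagonal matrix `E_i^-(t) = 1 + t e_{i+1, i}` (1-based `i`). -/
noncomputable def Eminus (n : ℕ) (i : ℕ) (t : ℂ) : Matrix (Fin n) (Fin n) ℂ :=
  1 + t • stdE n (i + 1) i

/-- `C_j^- = Σ_{α = i_{j-1}}^{i_j - 1} c_α^- e_{α+1, α}`. -/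
noncomputable def Cminus (n : ℕ) (i : ℕ → ℕ) (c : ℕ → ℂ) (j : ℕ) : Matrix (Fin n) (Fin n) ℂ :=
  ∑ α ∈ Finset.Ico (i (j - 1)) (i j), c α • stdE n (α + 1) α

lemma stdE_mul_stdE_eq_zero (n a b a' b' : ℕ) (h : b ≠ a') :
    stdE n a b * stdE n a' b' = 0 := by
  ext r s
  simp only [Matrix.mul_apply, stdE, Matrix.of_apply, Matrix.zero_apply]
  refine Finset.sum_eq_zero fun x _ => ?_
  split_ifs <;> first | omega | rfl | simp

lemma key (n : ℕ) (c : ℕ → ℂ) : ∀ (m s : ℕ),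
    (1 - ∑ α ∈ Finset.Ico s (s + m), c α • stdE n (α + 1) α) *
      (((List.range' s m).reverse).map (fun α => Eminus n α (c α))).prod = 1 := by
  intro m
  induction m with
  | zero => intro s; simp
  | succ m ih =>
    intro s
    have hsum : ∑ α ∈ Finset.Ico s (s + (m + 1)), c α • stdE n (α + 1) α =
        (∑ α ∈ Finset.Ico s (s + m), c α • stdE n (α + 1) α)
          + c (s + m) • stdE n (s + m + 1) (s + m) := by
      rw [show s + (m + 1) = (s + m) + 1 from rfl,
        Finset.sum_Ico_succ_top (Nat.le_add_right s m)]
    have hlist : ((List.range' s (m + 1)).reverse).map (fun α => Eminus n α (c α)) =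
        Eminus n (s + m) (c (s + m)) ::
          ((List.range' s m).reverse).map (fun α => Eminus n α (c α)) := by
      rw [List.range'_concat]
      simp
    rw [hsum, hlist, List.prod_cons]
    set C := ∑ α ∈ Finset.Ico s (s + m), c α • stdE n (α + 1) α with hC
    set e := stdE n (s + m + 1) (s + m) with he
    have hee : e * e = 0 := stdE_mul_stdE_eq_zero _ _ _ _ _ (by omega)
    have hCe : C * e = 0 := by
      rw [hC, Finset.sum_mul]
      refine Finset.sum_eq_zero fun α hα => ?_
      have : α < s + m := (Finset.mem_Ico.mp hα).2
      rw [Matrix.smul_mul, stdE_mul_stdE_eq_zero _ _ _ _ _ (by omega), smul_zero]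
    have hstep : (1 - (C + c (s + m) • e)) * Eminus n (s + m) (c (s + m)) = 1 - C := by
      rw [Eminus, ← he]
      have h1 : (c (s + m) • e) * (c (s + m) • e) = 0 := by
        rw [Matrix.smul_mul, Matrix.mul_smul, hee, smul_zero, smul_zero]
      have h2 : C * (c (s + m) • e) = 0 := by
        rw [Matrix.mul_smul, hCe, smul_zero]
      simp only [sub_mul, mul_add, add_mul, one_mul, mul_one, h1, h2]
      abel
    rw [← mul_assoc, hstep, ih]

/-- `(1 - C_j^-)⁻¹ = E^-_{i_j - 1}(c^-_{i_j - 1}) ⋯ E^-_{i_{j-1}}(c^-_{i_{j-1}})`,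
the product taken with decreasing indices. -/
theorem inv_one_sub_Cminus (n k : ℕ) (hn : 2 ≤ n) (hk : 1 ≤ k)
    (i : ℕ → ℕ) (hi0 : i 0 = 1) (hik : i k = n)
    (himono : StrictMonoOn i (Set.Icc 0 k))
    (c : ℕ → ℂ) (j : ℕ) (hj : j ∈ Finset.Icc 1 k) :
    (1 - Cminus n i c j)⁻¹ =
      (((List.range' (i (j - 1)) (i j - i (j - 1))).reverse).map
        (fun α => Eminus n α (c α))).prod := by
  obtain ⟨hj1, hjk⟩ := Finset.mem_Icc.mp hj
  have hlt : i (j - 1) < i j :=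
    himono (by simp; omega) (by simp; omega) (by omega)
  have hadd : i (j - 1) + (i j - i (j - 1)) = i j := by omega
  apply Matrix.inv_eq_right_inv
  have := key n c (i j - i (j - 1)) (i (j - 1))
  rw [hadd] at this
  rw [Cminus]
  exact this
end

section
/- Let X be an invertible n×n complex matrix with moments h_j = (X^j e_1, e_1) for j ∈ ℤ and Hankel determinants Δ_i^{(l)} as above. Then for every l ∈ ℤ, Δ_n^{(l)} = Δ_n^{(n-1)} · (det X)^{l+1-n}. -/
/-- For the full-size Hankel determinants built from the moments
`h_j = (X^j e_1, e_1)` of an invertible `n × n` matrix `X`, one has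
`Δ_n^{(l)} = Δ_n^{(n-1)} · (det X)^{l+1-n}` for every `l ∈ ℤ`. -/
theorem hankel_full_size_shift (n : ℕ) (hn : 0 < n) (X : GL (Fin n) ℂ)
    (h : ℤ → ℂ)
    (hh : ∀ j : ℤ, h j = ((X ^ j : GL (Fin n) ℂ) : Matrix (Fin n) (Fin n) ℂ) ⟨0, hn⟩ ⟨0, hn⟩)
    (Δ : ℕ → ℤ → ℂ)
    (hΔ : ∀ (i : ℕ) (l : ℤ),
      Δ i l = Matrix.det (Matrix.of fun α β : Fin i => h ((α : ℤ) + (β : ℤ) + l - i + 1)))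
    (l : ℤ) :
    Δ n l = Δ n ((n : ℤ) - 1) *
      ((X : Matrix (Fin n) (Fin n) ℂ).det) ^ (l + 1 - n) := by
  set z : Fin n := ⟨0, hn⟩ with hz
  set V : Matrix (Fin n) (Fin n) ℂ :=
    Matrix.of fun α i => ((X ^ (α : ℤ) : GL (Fin n) ℂ) : Matrix (Fin n) (Fin n) ℂ) z i with hV
  set W : Matrix (Fin n) (Fin n) ℂ :=
    Matrix.of fun i β => ((X ^ (β : ℤ) : GL (Fin n) ℂ) : Matrix (Fin n) (Fin n) ℂ) i z with hW
  have key : ∀ m : ℤ,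
      (Matrix.of fun α β : Fin n => h ((α : ℤ) + (β : ℤ) + m)) =
        V * ((X ^ m : GL (Fin n) ℂ) : Matrix (Fin n) (Fin n) ℂ) * W := by
    intro m
    ext α β
    have e1 : ((α : ℤ) + (β : ℤ) + m) = (α : ℤ) + m + (β : ℤ) := by ring
    have e2 : (X ^ ((α : ℤ) + m + (β : ℤ)) : GL (Fin n) ℂ) =
        X ^ (α : ℤ) * X ^ m * X ^ (β : ℤ) := by
      rw [zpow_add, zpow_add]
    simp only [Matrix.of_apply, hh, e1, e2, Units.val_mul, Matrix.mul_apply, hV, hW]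
  have detzpow : ∀ m : ℤ,
      ((X ^ m : GL (Fin n) ℂ) : Matrix (Fin n) (Fin n) ℂ).det =
        ((X : Matrix (Fin n) (Fin n) ℂ).det) ^ m := by
    intro m
    have := map_zpow (Units.map (Matrix.detMonoidHom : Matrix (Fin n) (Fin n) ℂ →* ℂ)) X m
    have h2 := congrArg Units.val this
    simp only [Units.coe_map, MonoidHom.coe_coe, Matrix.coe_detMonoidHom,
      Units.val_zpow_eq_zpow_val] at h2
    exact h2
  have hD1 : Δ n l = V.det * ((X : Matrix (Fin n) (Fin n) ℂ).det) ^ (l - n + 1) * W.det := by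
    have : (Matrix.of fun α β : Fin n => h ((α : ℤ) + (β : ℤ) + l - n + 1)) =
        (Matrix.of fun α β : Fin n => h ((α : ℤ) + (β : ℤ) + (l - n + 1))) := by
      ext α β; simp only [Matrix.of_apply]; congr 1; ring
    rw [hΔ, this, key (l - n + 1), Matrix.det_mul, Matrix.det_mul, detzpow]
  have hD2 : Δ n ((n : ℤ) - 1) = V.det * W.det := by
    have : (Matrix.of fun α β : Fin n => h ((α : ℤ) + (β : ℤ) + ((n : ℤ) - 1) - n + 1)) =
        (Matrix.of fun α β : Fin n => h ((α : ℤ) + (β : ℤ) + (0 : ℤ))) := by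
      ext α β; simp only [Matrix.of_apply, add_zero]; congr 1; ring
    rw [hΔ, this, key 0]
    simp
  rw [hD1, hD2]
  have : (l - n + 1) = (l + 1 - n) := by ring
  rw [this]; ring
end

section
/- Let X ∈ GL_n(ℂ) admit a factorization X = X_- X_0 X_+ with X_- ∈ N_- (lower unitriangular), X_0 = diag(d_1,...,d_n) invertible diagonal, X_+ ∈ N_+ (upper unitriangular), and define the Darboux transform D(X) = X_0 X_+ X_-. Then for every i ∈ ℤ, h_i(D(X)) = h_{i+1}(X) / h_1(X), where h_j(Y) = (Y^j e_1, e_1), provided h_1(X) ≠ 0. (Note h_1(X) = d_1.) -/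
/-- Darboux transformation of moments: if `X = X₋ X₀ X₊` and `D(X) = X₀ X₊ X₋`,
then `h_i(D(X)) = h_{i+1}(X) / h₁(X)` for all `i ∈ ℤ`. -/
theorem darboux_moments (n : ℕ) (hn : 0 < n)
    (X Y : GL (Fin n) ℂ) (L U : Matrix (Fin n) (Fin n) ℂ) (d : Fin n → ℂ)
    (hLlow : ∀ a b : Fin n, a < b → L a b = 0) (hLdiag : ∀ a : Fin n, L a a = 1)
    (hUup : ∀ a b : Fin n, b < a → U a b = 0) (hUdiag : ∀ a : Fin n, U a a = 1)
    (hd : ∀ a : Fin n, d a ≠ 0)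
    (hX : (X : Matrix (Fin n) (Fin n) ℂ) = L * Matrix.diagonal d * U)
    (hY : (Y : Matrix (Fin n) (Fin n) ℂ) = Matrix.diagonal d * U * L)
    (h1 : ((X ^ (1 : ℤ) : GL (Fin n) ℂ) : Matrix (Fin n) (Fin n) ℂ) ⟨0, hn⟩ ⟨0, hn⟩ ≠ 0) :
    ∀ i : ℤ,
      ((Y ^ i : GL (Fin n) ℂ) : Matrix (Fin n) (Fin n) ℂ) ⟨0, hn⟩ ⟨0, hn⟩ =
        ((X ^ (i + 1) : GL (Fin n) ℂ) : Matrix (Fin n) (Fin n) ℂ) ⟨0, hn⟩ ⟨0, hn⟩ /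
          ((X ^ (1 : ℤ) : GL (Fin n) ℂ) : Matrix (Fin n) (Fin n) ℂ) ⟨0, hn⟩ ⟨0, hn⟩ := by
  intro i
  set i0 : Fin n := ⟨0, hn⟩ with hi0
  set M : Matrix (Fin n) (Fin n) ℂ := Matrix.diagonal d * U with hM
  -- M is invertible
  have hUdet : U.det = 1 := by
    rw [Matrix.det_of_upperTriangular (fun a b h => hUup a b h)]
    simp [hUdiag]
  have hMdet : IsUnit M.det := by
    rw [hM, Matrix.det_mul, hUdet, Matrix.det_diagonal, mul_one]
    exact (Finset.prod_ne_zero_iff.mpr (fun a _ => hd a)).isUnit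
  have hMunit : IsUnit M := (Matrix.isUnit_iff_isUnit_det M).mpr hMdet
  set Mu : GL (Fin n) ℂ := hMunit.unit with hMu
  have hMuc : (Mu : Matrix (Fin n) (Fin n) ℂ) = M := rfl
  -- L as a GL element
  set Lu : GL (Fin n) ℂ := X * Mu⁻¹ with hLu
  have hLuc : (Lu : Matrix (Fin n) (Fin n) ℂ) = L := by
    have : (Lu : Matrix (Fin n) (Fin n) ℂ) * M = L * M := by
      have := Units.inv_mul Mu
      calc (Lu : Matrix (Fin n) (Fin n) ℂ) * M
          = (X : Matrix (Fin n) (Fin n) ℂ) * ((Mu⁻¹ : GL (Fin n) ℂ) * Mu : Matrix (Fin n) (Fin n) ℂ) := by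
            rw [hLu]; push_cast; rw [Matrix.mul_assoc]; rfl
        _ = (X : Matrix (Fin n) (Fin n) ℂ) := by rw [Units.inv_mul]; simp
        _ = L * M := by rw [hX, hM, Matrix.mul_assoc]
    exact hMunit.mul_right_cancel this
  have hXfac : X = Lu * Mu := by
    rw [hLu, mul_assoc, inv_mul_cancel, mul_one]
  have hYfac : Y = Mu * Lu := by
    ext1
    push_cast
    rw [hY, hMuc, hLuc, hM]
  -- conjugation: Y^i = Mu * X^i * Mu⁻¹
  have hpos : ∀ b : Fin n, b ≠ i0 → i0 < b := by
    intro b hb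
    rw [Fin.lt_def]
    have hb0 : (b : ℕ) ≠ 0 := fun h => hb (Fin.ext (by simp [hi0, h]))
    simp only [hi0]
    omega
  have hconj : ∀ j : ℤ, Y ^ j = Mu * X ^ j * Mu⁻¹ := by
    intro j
    have h0 : Y = MulAut.conj Mu X := by
      rw [hYfac, hXfac, MulAut.conj_apply]; group
    rw [h0, ← map_zpow, MulAut.conj_apply]
  -- X^(i+1) = Lu * Y^i * Mu
  have hkey : X ^ (i + 1) = Lu * Y ^ i * Mu := by
    rw [hconj i, hXfac]
    group
  -- entry computation
  set W : Matrix (Fin n) (Fin n) ℂ := ((Y ^ i : GL (Fin n) ℂ) : Matrix (Fin n) (Fin n) ℂ) with hW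
  have hMcol : ∀ b : Fin n, M b i0 = if b = i0 then d i0 else 0 := by
    intro b
    rw [hM, Matrix.mul_apply]
    rcases eq_or_ne b i0 with rfl | hb
    · simp [Matrix.diagonal_apply, Finset.sum_ite_eq', hUdiag]
    · have hb' : i0 < b := hpos b hb
      simp only [if_neg hb]
      apply Finset.sum_eq_zero
      intro x _
      rcases eq_or_ne x b with rfl | hx
      · rw [hUup x i0 hb', mul_zero]
      · rw [Matrix.diagonal_apply_ne d (Ne.symm hx), zero_mul]
  have hLrow : ∀ a : Fin n, L i0 a = if a = i0 then 1 else 0 := by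
    intro a
    rcases eq_or_ne a i0 with rfl | ha
    · simp [hLdiag]
    · simp [if_neg ha, hLlow i0 a (hpos a ha)]
  have hentry : ∀ V : Matrix (Fin n) (Fin n) ℂ, (L * V * M) i0 i0 = V i0 i0 * d i0 := by
    intro V
    rw [Matrix.mul_apply, Finset.sum_eq_single i0]
    · rw [hMcol i0, if_pos rfl, Matrix.mul_apply, Finset.sum_eq_single i0]
      · rw [hLrow i0, if_pos rfl, one_mul]
      · intro a _ ha
        rw [hLrow a, if_neg ha, zero_mul]
      · simp
    · intro b _ hb
      rw [hMcol b, if_neg hb, mul_zero]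
    · simp
  have hnum : ((X ^ (i + 1) : GL (Fin n) ℂ) : Matrix (Fin n) (Fin n) ℂ) i0 i0 = W i0 i0 * d i0 := by
    rw [hkey]
    have hc : ((Lu * Y ^ i * Mu : GL (Fin n) ℂ) : Matrix (Fin n) (Fin n) ℂ) = L * W * M := by
      rw [Units.val_mul, Units.val_mul, hLuc, hMuc, hW]
    rw [hc, hentry]
  have hden : ((X ^ (1 : ℤ) : GL (Fin n) ℂ) : Matrix (Fin n) (Fin n) ℂ) i0 i0 = d i0 := by
    rw [zpow_one, hX, Matrix.mul_assoc, ← hM, Matrix.mul_apply, Finset.sum_eq_single i0]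
    · rw [hLrow i0, if_pos rfl, one_mul, hMcol i0, if_pos rfl]
    · intro b _ hb
      rw [hLrow b, if_neg hb, zero_mul]
    · simp
  rw [hnum, hden, mul_div_assoc, div_self (hd i0), mul_one]
end
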